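/- Let P be an Eulerian path in a multi-digraph G, let Q be a subcircuit of P, and let R = {R_1, ..., R_k} be the set of all daughters of Q (the maximal proper subcircuits of Q). If the set of edges Q ∖ (R_1 ∪ ... ∪ R_k), taken in the order induced by P, forms an oriented circuit in G, then this oriented circuit is in fact an oriented cycle, i.e., it contains no smaller closed orientation-respecting walk as a proper subwalk. -/

import Mathlib

/-- A multi-digraph on vertex type `V` with edge type `E`: each edge has a source and a
target vertex. Parallel edges and loops are allowed. -/
structure MultiDigraph (V : Type) (E : Type) where
  src : E → V
  tgt : E → V

namespace MultiDigraph

variable {V E : Type}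

/-- Two vertices are adjacent (in the undirected sense) if some edge joins them. -/
def Adj (G : MultiDigraph V E) (u v : V) : Prop :=
  (∃ e, G.src e = u ∧ G.tgt e = v) ∨ (∃ e, G.src e = v ∧ G.tgt e = u)

/-- A multi-digraph is connected if there is an undirected walk between any two vertices. -/
def Connected (G : MultiDigraph V E) : Prop :=
  ∀ u v : V, Relation.ReflTransGen G.Adj u v

/-- An Eulerian path with `n` edges, given by its vertex sequence `verts` and the order
`edges` in which the edges are traversed: every edge is traversed exactly once
(`edges` is bijective), respecting orientations, and the `i`-th edge goes from the
`i`-th vertex to the `(i+1)`-st vertex of the sequence. -/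
structure IsEulerianPath (G : MultiDigraph V E) (n : ℕ)
    (verts : Fin (n + 1) → V) (edges : Fin n → E) : Prop where
  edges_bij : Function.Bijective edges
  src_eq : ∀ i : Fin n, G.src (edges i) = verts i.castSucc
  tgt_eq : ∀ i : Fin n, G.tgt (edges i) = verts i.succ

/-- The out-degree of a vertex: the number of edges having it as source. -/
def outDegree (G : MultiDigraph V E) [Fintype E] [DecidableEq V] (v : V) : ℕ :=
  (Finset.univ.filter fun e => G.src e = v).card

/-- The in-degree of a vertex: the number of edges having it as target. -/
def inDegree (G : MultiDigraph V E) [Fintype E] [DecidableEq V] (v : V) : ℕ :=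
  (Finset.univ.filter fun e => G.tgt e = v).card

/-- The total degree of a vertex: its in-degree plus its out-degree. -/
def degree (G : MultiDigraph V E) [Fintype E] [DecidableEq V] (v : V) : ℕ :=
  G.outDegree v + G.inDegree v

end MultiDigraph

namespace MultiDigraph

variable {V E : Type}

/-- A subcircuit of an Eulerian path with vertex sequence `verts`, given by the interval
of path positions `[a, b)`: it consists of the consecutive edges from position `a` to
position `b − 1`, and it is an oriented circuit precisely when `verts a = verts b`. -/
def IsSubcircuit {n : ℕ} (verts : Fin (n + 1) → V) (a b : Fin (n + 1)) : Prop :=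
  a < b ∧ verts a = verts b

/-- The interval `[c, d)` is properly nested in the interval `[a, b)`. -/
def ProperlyNested {n : ℕ} (a b c d : Fin (n + 1)) : Prop :=
  a ≤ c ∧ d ≤ b ∧ (c, d) ≠ (a, b)

/-- The subcircuit `[c, d)` is a daughter of the subcircuit `[a, b)`: it is properly
nested in `[a, b)` and there is no subcircuit strictly between them. -/
def IsDaughter {n : ℕ} (verts : Fin (n + 1) → V) (a b c d : Fin (n + 1)) : Prop :=
  IsSubcircuit verts c d ∧ ProperlyNested a b c d ∧
    ¬ ∃ e f : Fin (n + 1), IsSubcircuit verts e f ∧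
      ProperlyNested e f c d ∧ ProperlyNested a b e f

open scoped Classical in
/-- The edges of the subcircuit `[a, b)` that do not lie in any of its daughters, taken in
the order induced by the path. -/
noncomputable def remainingEdges {n : ℕ} (verts : Fin (n + 1) → V) (edges : Fin n → E)
    (a b : Fin (n + 1)) : List E :=
  ((Finset.univ.filter fun k : Fin n =>
      (a : ℕ) ≤ (k : ℕ) ∧ (k : ℕ) < (b : ℕ) ∧
      ¬ ∃ c d : Fin (n + 1), IsDaughter verts a b c d ∧
        (c : ℕ) ≤ (k : ℕ) ∧ (k : ℕ) < (d : ℕ)).sort (· ≤ ·)).map edges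

/-- A nonempty list of edges forms a closed orientation-respecting walk: the target of
each edge is the source of the next, and the target of the last edge is the source of the
first. -/
def IsClosedWalkList (G : MultiDigraph V E) (c : List E) : Prop :=
  c ≠ [] ∧ List.Chain' (fun e f => G.tgt e = G.src f) c ∧
    ∀ x ∈ c.head?, ∀ y ∈ c.getLast?, G.tgt y = G.src x

/-- An oriented cycle: a closed orientation-respecting walk containing no smaller closed
walk, i.e. one visiting no vertex twice (the sources of its edges are pairwise distinct). -/
def IsOrientedCycleList (G : MultiDigraph V E) (c : List E) : Prop :=
  G.IsClosedWalkList c ∧ (c.map G.src).Nodup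

end MultiDigraph

/-!
Two edges of the remaining circuit with the same source vertex, at path positions `k < l`,
would delimit a subcircuit `[k, l)` properly nested in `Q`. Every such subcircuit lies in a
daughter of `Q` (take a maximal one containing it), so position `k` would lie in a daughter,
contradicting that its edge remains.
-/

namespace MultiDigraph

variable {V E : Type} {n : ℕ}

theorem ProperlyNested.sub_lt {a b c d : Fin (n + 1)} (h : ProperlyNested a b c d)
    (hcd : c ≤ d) : (d : ℕ) - c < (b : ℕ) - a := by
  obtain ⟨hac, hdb, hne⟩ := h
  have hne' : (c : ℕ) ≠ a ∨ (d : ℕ) ≠ b := by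
    by_contra! h
    exact hne (Prod.ext (Fin.ext h.1) (Fin.ext h.2))
  rw [Fin.le_def] at hac hdb hcd
  omega

theorem exists_isDaughter_of_properlyNested (verts : Fin (n + 1) → V) {a b c d : Fin (n + 1)}
    (hcd : IsSubcircuit verts c d) (hnest : ProperlyNested a b c d) :
    ∃ e f, IsDaughter verts a b e f ∧ e ≤ c ∧ d ≤ f := by
  classical
  let S := Finset.univ.filter fun p : Fin (n + 1) × Fin (n + 1) =>
    IsSubcircuit verts p.1 p.2 ∧ ProperlyNested a b p.1 p.2 ∧ p.1 ≤ c ∧ d ≤ p.2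
  obtain ⟨⟨e, f⟩, hp, hmax⟩ :=
    S.exists_max_image (fun p => (p.2 : ℕ) - p.1) ⟨(c, d), by simp [S, hcd, hnest]⟩
  simp only [S, Finset.mem_filter, Finset.mem_univ, true_and] at hp hmax
  obtain ⟨hef, hnest_ef, hec, hdf⟩ := hp
  refine ⟨e, f, ⟨hef, hnest_ef, ?_⟩, hec, hdf⟩
  rintro ⟨g, h, hgh, hinner, houter⟩
  have hle := hmax (g, h) ⟨hgh, houter, hinner.1.trans hec, hdf.trans hinner.2.1⟩
  exact (hinner.sub_lt hef.1.le).not_ge hle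

open scoped Classical in
noncomputable def remainingPositions (verts : Fin (n + 1) → V) (a b : Fin (n + 1)) :
    Finset (Fin n) :=
  Finset.univ.filter fun k : Fin n =>
    (a : ℕ) ≤ (k : ℕ) ∧ (k : ℕ) < (b : ℕ) ∧
    ¬ ∃ c d : Fin (n + 1), IsDaughter verts a b c d ∧
      (c : ℕ) ≤ (k : ℕ) ∧ (k : ℕ) < (d : ℕ)

theorem remainingEdges_eq (verts : Fin (n + 1) → V) (edges : Fin n → E) (a b : Fin (n + 1)) :
    remainingEdges verts edges a b = ((remainingPositions verts a b).sort (· ≤ ·)).map edges :=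
  rfl

theorem verts_castSucc_ne_of_mem_remainingPositions {verts : Fin (n + 1) → V}
    {a b : Fin (n + 1)} {k l : Fin n} (hk : k ∈ remainingPositions verts a b)
    (hl : l ∈ remainingPositions verts a b) (hkl : k < l) :
    verts k.castSucc ≠ verts l.castSucc := by
  intro heq
  simp only [remainingPositions, Finset.mem_filter, Finset.mem_univ, true_and] at hk hl
  obtain ⟨hak, -, hk_free⟩ := hk
  obtain ⟨-, hlb, -⟩ := hl
  have hnest : ProperlyNested a b k.castSucc l.castSucc := by
    refine ⟨Fin.le_def.mpr hak, Fin.le_def.mpr hlb.le, fun h => ?_⟩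
    have : (l : ℕ) = b := congrArg (fun p => (p.2 : ℕ)) h
    omega
  obtain ⟨e, f, hdaughter, hek, hlf⟩ :=
    exists_isDaughter_of_properlyNested verts ⟨Fin.castSucc_lt_castSucc_iff.mpr hkl, heq⟩ hnest
  exact hk_free
    ⟨e, f, hdaughter, Fin.le_def.mp hek, (Fin.lt_def.mp hkl).trans_le (Fin.le_def.mp hlf)⟩

theorem injOn_verts_castSucc_remainingPositions (verts : Fin (n + 1) → V) (a b : Fin (n + 1)) :
    Set.InjOn (fun k : Fin n => verts k.castSucc) (remainingPositions verts a b) := by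
  intro k hk l hl heq
  rcases lt_trichotomy k l with hkl | hkl | hkl
  · exact absurd heq (verts_castSucc_ne_of_mem_remainingPositions hk hl hkl)
  · exact hkl
  · exact absurd heq.symm (verts_castSucc_ne_of_mem_remainingPositions hl hk hkl)

end MultiDigraph

theorem remaining_circuit_is_cycle_general
    {V E : Type} (G : MultiDigraph V E)
    (n : ℕ) (verts : Fin (n + 1) → V) (edges : Fin n → E)
    (hP : G.IsEulerianPath n verts edges)
    (a b : Fin (n + 1))
    (hcirc : G.IsClosedWalkList (MultiDigraph.remainingEdges verts edges a b)) :
    G.IsOrientedCycleList (MultiDigraph.remainingEdges verts edges a b) := by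
  refine ⟨hcirc, ?_⟩
  have hsrc : G.src ∘ edges = fun k => verts k.castSucc := funext hP.src_eq
  rw [MultiDigraph.remainingEdges_eq, List.map_map, hsrc]
  refine (Finset.sort_nodup _ _).map_on fun k hk l hl => ?_
  exact MultiDigraph.injOn_verts_castSucc_remainingPositions verts a b
    (Finset.mem_sort _ |>.mp hk) (Finset.mem_sort _ |>.mp hl)

/-- Let `P` be an Eulerian path in a multi-digraph `G`, let `Q` be a
subcircuit of `P` (the interval of positions `[a, b)`), and let `R = {R₁, …, R_k}` be the
set of all daughters of `Q`.  If the set of edges `Q ∖ (R₁ ∪ … ∪ R_k)`, taken in the order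
induced by `P`, forms an oriented circuit in `G`, then this circuit is in fact an oriented
cycle: it contains no smaller closed orientation-respecting walk. -/
theorem remaining_circuit_is_cycle
    {V E : Type} (G : MultiDigraph V E)
    (n : ℕ) (verts : Fin (n + 1) → V) (edges : Fin n → E)
    (hP : G.IsEulerianPath n verts edges)
    (a b : Fin (n + 1)) (hQ : MultiDigraph.IsSubcircuit verts a b)
    (hcirc : G.IsClosedWalkList (MultiDigraph.remainingEdges verts edges a b)) :
    G.IsOrientedCycleList (MultiDigraph.remainingEdges verts edges a b) :=
  remaining_circuit_is_cycle_general G n verts edges hP a b hcirc
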